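/- arXiv:1708.03853 — 2 statements merged into one kernel-verified Lean document; each statement's English description precedes it below -/
import Mathlib

section
/- Let G be a finite simple graph with m edges, let T be a positive integer, and let H be the split graph with vertex set (V(G) × {1,…,T}) ⊔ E(G), where (u,i) is adjacent to the edge-vertex b_e if and only if u is an endpoint of e, and all pairs of distinct edge-vertices are adjacent. For every total coloring c of G there exists a total coloring c' of H with c'((u,i)) = c(u) for all u and all i, such that the number of happy edges of H with respect to c' is at least T·(m + h), where h is the number of happy edges of G with respect to c. -/
/-- The number of happy edges (edges whose endpoints share a color) w.r.t. a total coloring. -/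
noncomputable def happyEdgeCount {V Col : Type*} (G : SimpleGraph V) (c : V → Col) : ℕ :=
  {e ∈ G.edgeSet | (Sym2.map c e).IsDiag}.ncard

/-- The `T`-copy split gadget of a graph: `T` copies of each vertex of `G`, each adjacent to
the edge-vertices of its incident edges, and the edge-vertices form a clique. -/
def SplitGadget {V : Type*} (G : SimpleGraph V) (T : ℕ) :
    SimpleGraph ((V × Fin T) ⊕ G.edgeSet) where
  Adj x y :=
    match x, y with
    | Sum.inl a, Sum.inr e => a.1 ∈ (e : Sym2 V)
    | Sum.inr e, Sum.inl a => a.1 ∈ (e : Sym2 V)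
    | Sum.inr e, Sum.inr f => e ≠ f
    | _, _ => False
  symm := by
    constructor
    rintro (a | e) (b | f) h <;> simp_all
    exact fun h' => h h'.symm
  loopless := by
    constructor
    rintro (a | e) h <;> simp_all

/-!
Colour each edge-vertex `b_e` like one chosen endpoint of `e`. For every copy `i`, the gadget
edge between `b_e` and the copy of that endpoint is then happy, and so is the one to the copy of
the other endpoint when `e` is happy in `G`. These gadget edges are pairwise distinct, which
gives `T * (m + h)` happy edges.
-/

section

variable {V Col : Type*}

theorem Sym2.mk_inl_inr_inj {α β : Type*} {a a' : α} {b b' : β} :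
    s(Sum.inl a, Sum.inr b) = s(Sum.inl a', Sum.inr b') ↔ a = a' ∧ b = b' := by
  simp

theorem Sym2.out_fst_ne_out_snd {e : Sym2 V} (he : ¬e.IsDiag) : e.out.1 ≠ e.out.2 := by
  rw [← e.out_eq, Sym2.mk_isDiag_iff] at he
  exact he

def happyEdges (G : SimpleGraph V) (c : V → Col) : Set (Sym2 V) :=
  {e ∈ G.edgeSet | (Sym2.map c e).IsDiag}

theorem happyEdgeCount_eq_natCard_happyEdges (G : SimpleGraph V) (c : V → Col) :
    happyEdgeCount G c = Nat.card (happyEdges G c) :=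
  (Nat.card_coe_set_eq _).symm

variable (G : SimpleGraph V) (T : ℕ)

noncomputable def splitGadgetColoring (c : V → Col) : (V × Fin T) ⊕ G.edgeSet → Col :=
  Sum.elim (fun a => c a.1) (fun e => c (e : Sym2 V).out.1)

noncomputable def happyIncidence (c : V → Col) : G.edgeSet ⊕ happyEdges G c → V × G.edgeSet
  | .inl e => ((e : Sym2 V).out.1, e)
  | .inr e => ((e : Sym2 V).out.2, ⟨e, e.2.1⟩)

variable {G}

theorem happyIncidence_injective (c : V → Col) : (happyIncidence G c).Injective := by
  have hne (e : Sym2 V) (he : e ∈ G.edgeSet) : e.out.1 ≠ e.out.2 :=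
    Sym2.out_fst_ne_out_snd (G.not_isDiag_of_mem_edgeSet he)
  rintro (⟨e, he⟩ | ⟨e, he⟩) (⟨f, hf⟩ | ⟨f, hf⟩) h <;>
    simp only [happyIncidence, Prod.mk.injEq, Subtype.mk.injEq] at h <;>
    obtain ⟨hv, rfl⟩ := h
  · rfl
  · exact absurd hv (hne e he)
  · exact absurd hv.symm (hne e he.1)
  · rfl

theorem happyIncidence_mem (c : V → Col) (x : G.edgeSet ⊕ happyEdges G c) :
    (happyIncidence G c x).1 ∈ ((happyIncidence G c x).2 : Sym2 V) := by
  rcases x with e | e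
  exacts [e.1.out_fst_mem, e.1.out_snd_mem]

theorem happyIncidence_color (c : V → Col) (x : G.edgeSet ⊕ happyEdges G c) :
    c (happyIncidence G c x).1 = c ((happyIncidence G c x).2 : Sym2 V).out.1 := by
  rcases x with e | ⟨e, -, he⟩
  · rfl
  · rw [← e.out_eq, Sym2.map_mk, Sym2.mk_isDiag_iff] at he
    exact he.symm

theorem mk_mem_happyEdges_splitGadget (c : V → Col) {a : V × Fin T} {e : G.edgeSet}
    (ha : a.1 ∈ (e : Sym2 V)) (hc : c a.1 = c (e : Sym2 V).out.1) :
    s(.inl a, .inr e) ∈ happyEdges (SplitGadget G T) (splitGadgetColoring G T c) :=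
  ⟨ha, by simpa [splitGadgetColoring] using hc⟩

theorem card_le_happyEdges_splitGadget (c : V → Col) [Finite V] :
    Nat.card (Fin T × (G.edgeSet ⊕ happyEdges G c)) ≤
      Nat.card (happyEdges (SplitGadget G T) (splitGadgetColoring G T c)) := by
  let f (p : Fin T × (G.edgeSet ⊕ happyEdges G c)) :
      happyEdges (SplitGadget G T) (splitGadgetColoring G T c) :=
    ⟨_, mk_mem_happyEdges_splitGadget T c (a := ((happyIncidence G c p.2).1, p.1))
      (happyIncidence_mem c p.2) (happyIncidence_color c p.2)⟩
  refine Nat.card_le_card_of_injective f fun p q hpq => ?_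
  obtain ⟨ha, he⟩ := Sym2.mk_inl_inr_inj.mp (congrArg Subtype.val hpq)
  obtain ⟨hv, hi⟩ := Prod.mk.inj ha
  exact Prod.ext hi (happyIncidence_injective c (Prod.ext hv he))

end

theorem splitGadget_happyEdges_ge_general
    {V Col : Type*} [Fintype V] (G : SimpleGraph V)
    (T : ℕ) (c : V → Col) :
    ∃ c' : ((V × Fin T) ⊕ G.edgeSet) → Col,
      (∀ (u : V) (i : Fin T), c' (Sum.inl (u, i)) = c u) ∧
      T * (G.edgeSet.ncard + happyEdgeCount G c) ≤ happyEdgeCount (SplitGadget G T) c' := by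
  refine ⟨splitGadgetColoring G T c, fun u i => rfl, ?_⟩
  have hcard : Nat.card (Fin T × (G.edgeSet ⊕ happyEdges G c)) =
      T * (G.edgeSet.ncard + happyEdgeCount G c) := by
    rw [Nat.card_prod, Nat.card_sum, Nat.card_fin, Nat.card_coe_set_eq,
      happyEdgeCount_eq_natCard_happyEdges]
  rw [← hcard, happyEdgeCount_eq_natCard_happyEdges]
  exact card_le_happyEdges_splitGadget T c

/-- For every total coloring `c` of `G` there is a total coloring `c'` of the `T`-copy split
gadget of `G` with `c' (u, i) = c u` for all copies, whose number of happy edges is at least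
`T * (m + h)`, where `h` is the number of happy edges of `G` w.r.t. `c`. -/
theorem splitGadget_happyEdges_ge
    {V Col : Type*} [Fintype V] [DecidableEq V] (G : SimpleGraph V) [DecidableRel G.Adj]
    (T : ℕ) (hT : 0 < T) (c : V → Col) :
    ∃ c' : ((V × Fin T) ⊕ G.edgeSet) → Col,
      (∀ (u : V) (i : Fin T), c' (Sum.inl (u, i)) = c u) ∧
      T * (G.edgeSet.ncard + happyEdgeCount G c) ≤ happyEdgeCount (SplitGadget G T) c' :=
  splitGadget_happyEdges_ge_general G T c
end

section
/- Let G be a finite simple graph with m edges, let p : S → C be a partial coloring of G, let T = C(m,2) + 1, and let H be the T-copy split gadget of G with the partial coloring q that precolors every copy (u,i) with p(u) for each u ∈ S and i ∈ {1,…,T} (and precolors no edge-vertex). Then for every nonnegative integer k, there exists a total coloring of G extending p with at least k happy edges if and only if there exists a total coloring of H extending q with at least T·(m + k) happy edges. -/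
open Finset

namespace Sym2

variable {α β : Type*} [DecidableEq α] [DecidableEq β]

theorem card_filter_toFinset_le (e : Sym2 α) (f : α → β) (b : β) :
    #{u ∈ e.toFinset | f u = b} ≤ 1 + if (e.map f).IsDiag then 1 else 0 := by
  induction e using Sym2.ind with
  | _ x y =>
    simp only [toFinset_mk_eq, map_mk, mk_isDiag_iff, filter_insert, filter_singleton]
    by_cases hxy : x = y
    · subst hxy
      split_ifs <;> simp
    · split_ifs <;> simp_all [card_insert_of_notMem]

theorem card_filter_toFinset_eq {e : Sym2 α} (he : ¬e.IsDiag) {x : α} (hx : x ∈ e) (f : α → β) :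
    #{u ∈ e.toFinset | f u = f x} = 1 + if (e.map f).IsDiag then 1 else 0 := by
  obtain ⟨y, rfl⟩ := mem_iff_exists.mp hx
  have hxy : x ≠ y := fun h => he (mk_isDiag_iff.mpr h)
  simp only [toFinset_mk_eq, map_mk, mk_isDiag_iff, filter_insert, filter_singleton]
  split_ifs <;> simp_all [card_insert_of_notMem, eq_comm]

theorem ncard_setOf_not_isDiag [Fintype α] :
    {z : Sym2 α | ¬z.IsDiag}.ncard = (Fintype.card α).choose 2 := by
  rw [Set.ncard_eq_toFinset_card', Set.toFinset_card]
  exact card_subtype_not_diag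

end Sym2

section happyEdgeCount

variable {V Col : Type*} (G : SimpleGraph V) (c : V → Col)

def happyEdgeSet : Set (Sym2 V) :=
  {e ∈ G.edgeSet | (Sym2.map c e).IsDiag}

theorem happyEdgeCount_eq_ncard : happyEdgeCount G c = (happyEdgeSet G c).ncard := rfl

variable [Fintype G.edgeSet] [DecidableEq Col]

theorem happyEdgeCount_eq_sum :
    happyEdgeCount G c = ∑ e : G.edgeSet, if ((e : Sym2 V).map c).IsDiag then 1 else 0 := by
  rw [← card_filter, happyEdgeCount, ← Nat.card_coe_set_eq, ← Fintype.card_subtype,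
    ← Nat.card_eq_fintype_card]
  exact Nat.card_congr (Equiv.subtypeSubtypeEquivSubtypeInter _ _).symm

theorem ncard_edgeSet_add_happyEdgeCount :
    G.edgeSet.ncard + happyEdgeCount G c =
      ∑ e : G.edgeSet, (1 + if ((e : Sym2 V).map c).IsDiag then 1 else 0) := by
  rw [sum_add_distrib, ← happyEdgeCount_eq_sum, Set.ncard_eq_toFinset_card', Set.toFinset_card]
  simp

end happyEdgeCount

namespace SplitGadget

variable {V Col : Type*} {G : SimpleGraph V} {T : ℕ}

def crossEdge (x : (_ : Fin T × G.edgeSet) × V) : Sym2 ((V × Fin T) ⊕ G.edgeSet) :=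
  s(Sum.inl (x.2, x.1.1), Sum.inr x.1.2)

theorem crossEdge_injective : Function.Injective (crossEdge (G := G) (T := T)) := by
  rintro ⟨⟨i, e⟩, u⟩ ⟨⟨j, f⟩, w⟩ h
  simp only [crossEdge, Sym2.eq_iff, Sum.inl.injEq, Sum.inr.injEq, Prod.mk.injEq, reduceCtorEq,
    and_false, or_false] at h
  obtain ⟨⟨rfl, rfl⟩, rfl⟩ := h
  rfl

noncomputable def extendColoring (c : V → Col) : (V × Fin T) ⊕ G.edgeSet → Col :=
  Sum.elim (fun a => c a.1) (fun e => c (e : Sym2 V).out.1)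

variable [DecidableEq V] [Fintype G.edgeSet]

section happyCrossEdges

variable [DecidableEq Col]

/-- The index `⟨(i, e), u⟩` stands for the edge `{(u, i), b_e}`. -/
def happyCrossEdges (c' : (V × Fin T) ⊕ G.edgeSet → Col) :
    Finset ((_ : Fin T × G.edgeSet) × V) :=
  univ.sigma fun ie => {u ∈ (ie.2 : Sym2 V).toFinset | c' (.inl (u, ie.1)) = c' (.inr ie.2)}

theorem crossEdge_mem_happyEdgeSet (c' : (V × Fin T) ⊕ G.edgeSet → Col)
    {x : (_ : Fin T × G.edgeSet) × V} (hx : x ∈ happyCrossEdges c') :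
    crossEdge x ∈ happyEdgeSet (SplitGadget G T) c' := by
  simp_all [happyEdgeSet, happyCrossEdges, crossEdge, SplitGadget]

theorem happyEdgeSet_subset (c' : (V × Fin T) ⊕ G.edgeSet → Col) :
    happyEdgeSet (SplitGadget G T) c' ⊆
      Sym2.map Sum.inr '' {z | ¬z.IsDiag} ∪ ↑((happyCrossEdges c').image crossEdge) := by
  rintro z ⟨hz, hc⟩
  induction z using Sym2.ind with
  | _ x y =>
  rcases x with a | e <;> rcases y with b | f
  · exact hz.elim
  · refine .inr (mem_image.mpr ⟨⟨(a.2, f), a.1⟩, ?_, rfl⟩)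
    simpa [happyCrossEdges] using ⟨hz, hc⟩
  · refine .inr (mem_image.mpr ⟨⟨(b.2, e), b.1⟩, ?_, Sym2.eq_swap⟩)
    simpa [happyCrossEdges] using ⟨hz, (Sym2.mk_isDiag_iff.mp hc).symm⟩
  · exact .inl ⟨s(e, f), by simpa using (show e ≠ f from hz), rfl⟩

theorem card_happyCrossEdges_le_happyEdgeCount (c' : (V × Fin T) ⊕ G.edgeSet → Col) :
    #(happyCrossEdges c') ≤ happyEdgeCount (SplitGadget G T) c' := by
  rw [← card_image_of_injective _ crossEdge_injective, ← Set.ncard_coe_finset, coe_image,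
    happyEdgeCount_eq_ncard]
  refine Set.ncard_le_ncard ?_
    (((Set.toFinite _).union (finite_toSet _)).subset (happyEdgeSet_subset c'))
  rintro _ ⟨x, hx, rfl⟩
  exact crossEdge_mem_happyEdgeSet c' hx

theorem happyEdgeCount_le_choose_add_card_happyCrossEdges
    (c' : (V × Fin T) ⊕ G.edgeSet → Col) :
    happyEdgeCount (SplitGadget G T) c' ≤ G.edgeSet.ncard.choose 2 + #(happyCrossEdges c') :=
  calc happyEdgeCount (SplitGadget G T) c'
      ≤ (Sym2.map Sum.inr '' {z : Sym2 G.edgeSet | ¬z.IsDiag} ∪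
          ↑((happyCrossEdges c').image crossEdge)).ncard :=
        Set.ncard_le_ncard (happyEdgeSet_subset c') ((Set.toFinite _).union (finite_toSet _))
    _ ≤ (Sym2.map Sum.inr '' {z : Sym2 G.edgeSet | ¬z.IsDiag}).ncard +
          #((happyCrossEdges c').image crossEdge) := by
        rw [← Set.ncard_coe_finset]
        exact Set.ncard_union_le _ _
    _ ≤ G.edgeSet.ncard.choose 2 + #(happyCrossEdges c') := by
        rw [Set.ncard_image_of_injective _ (Sym2.map.injective Sum.inr_injective),
          Sym2.ncard_setOf_not_isDiag, ← Nat.card_eq_fintype_card, Nat.card_coe_set_eq]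
        exact Nat.add_le_add_left card_image_le _

theorem card_happyCrossEdges (c' : (V × Fin T) ⊕ G.edgeSet → Col) :
    #(happyCrossEdges c') = ∑ i, ∑ e : G.edgeSet,
      #{u ∈ (e : Sym2 V).toFinset | c' (.inl (u, i)) = c' (.inr e)} := by
  rw [happyCrossEdges, card_sigma, ← univ_product_univ, sum_product]

theorem card_happyCrossEdges_le (c' : (V × Fin T) ⊕ G.edgeSet → Col) :
    #(happyCrossEdges c') ≤
      ∑ i, (G.edgeSet.ncard + happyEdgeCount G fun v => c' (.inl (v, i))) := by
  rw [card_happyCrossEdges]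
  gcongr with i
  rw [ncard_edgeSet_add_happyEdgeCount]
  gcongr with e
  exact Sym2.card_filter_toFinset_le _ _ _

theorem card_happyCrossEdges_extendColoring (c : V → Col) :
    #(happyCrossEdges (extendColoring (G := G) (T := T) c)) =
      T * (G.edgeSet.ncard + happyEdgeCount G c) := by
  rw [card_happyCrossEdges, ncard_edgeSet_add_happyEdgeCount]
  calc _ = ∑ _i : Fin T, ∑ e : G.edgeSet, (1 + if ((e : Sym2 V).map c).IsDiag then 1 else 0) :=
        sum_congr rfl fun i _ => sum_congr rfl fun e _ =>
          Sym2.card_filter_toFinset_eq (G.not_isDiag_of_mem_edgeSet e.2) (Sym2.out_fst_mem _) c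
    _ = _ := by rw [sum_const, card_univ, Fintype.card_fin, smul_eq_mul]

end happyCrossEdges

theorem happyEdgeCount_le (c' : (V × Fin T) ⊕ G.edgeSet → Col) :
    happyEdgeCount (SplitGadget G T) c' ≤ G.edgeSet.ncard.choose 2 +
      ∑ i, (G.edgeSet.ncard + happyEdgeCount G fun v => c' (.inl (v, i))) := by
  classical
  exact (happyEdgeCount_le_choose_add_card_happyCrossEdges c').trans
    (Nat.add_le_add_left (card_happyCrossEdges_le c') _)

theorem le_happyEdgeCount_extendColoring (c : V → Col) :
    T * (G.edgeSet.ncard + happyEdgeCount G c) ≤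
      happyEdgeCount (SplitGadget G T) (extendColoring c) := by
  classical
  rw [← card_happyCrossEdges_extendColoring]
  exact card_happyCrossEdges_le_happyEdgeCount _

end SplitGadget

theorem Fintype.exists_le_of_card_mul_le_add_sum {ι : Type*} [Fintype ι] {f : ι → ℕ} {a r : ℕ}
    (h : Fintype.card ι * a ≤ r + ∑ i, f i) (hr : r < Fintype.card ι) : ∃ i, a ≤ f i := by
  obtain ⟨i, -, hi⟩ : ∃ i ∈ univ, a < f i + 1 := by
    refine exists_lt_of_sum_lt ?_
    rw [sum_const, card_univ, smul_eq_mul, sum_add_distrib, sum_const, card_univ, smul_eq_mul]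
    omega
  exact ⟨i, Nat.le_of_lt_succ hi⟩

/-- With `T = C(m,2) + 1`: `G` with partial coloring `p` admits an extension with at least `k`
happy edges iff the `T`-copy split gadget of `G`, precolored by `p` on every copy of every
precolored vertex, admits an extension with at least `T * (m + k)` happy edges. -/
theorem splitGadget_happyEdges_iff
    {V Col : Type*} [Fintype V] [DecidableEq V] (G : SimpleGraph V) [DecidableRel G.Adj]
    (S : Set V) (p : S → Col) (T : ℕ) (hT : T = Nat.choose G.edgeSet.ncard 2 + 1) (k : ℕ) :
    (∃ c : V → Col, (∀ v (hv : v ∈ S), c v = p ⟨v, hv⟩) ∧ k ≤ happyEdgeCount G c) ↔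
    (∃ c' : ((V × Fin T) ⊕ G.edgeSet) → Col,
      (∀ (v : V) (hv : v ∈ S) (i : Fin T), c' (Sum.inl (v, i)) = p ⟨v, hv⟩) ∧
      T * (G.edgeSet.ncard + k) ≤ happyEdgeCount (SplitGadget G T) c') := by
  constructor
  · rintro ⟨c, hc, hk⟩
    refine ⟨SplitGadget.extendColoring c, fun v hv _ => hc v hv, ?_⟩
    calc T * (G.edgeSet.ncard + k) ≤ T * (G.edgeSet.ncard + happyEdgeCount G c) := by gcongr
      _ ≤ _ := SplitGadget.le_happyEdgeCount_extendColoring c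
  · rintro ⟨c', hc', hk⟩
    have hbound := hk.trans (SplitGadget.happyEdgeCount_le c')
    obtain ⟨i, hi⟩ := Fintype.exists_le_of_card_mul_le_add_sum (ι := Fin T)
      (by rw [Fintype.card_fin]; exact hbound) (by rw [Fintype.card_fin]; omega)
    exact ⟨fun v => c' (.inl (v, i)), fun v hv => hc' v hv i, by omega⟩
end
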